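/- For every formula α in negation normal form, there exists a derivation from ⊤ to α ∨ ᾱ using only atomic interaction (⊤ → a ∨ ¬a), switch, and equality steps, whose length is O(|α|) and whose total size is O(|α|²), where ᾱ is the De Morgan dual of α. -/

import Mathlib

/-- Formulae of the calculus of structures in negation normal form. -/
inductive Formula : Type
  | top : Formula
  | bot : Formula
  | atom : ℕ → Formula
  | natom : ℕ → Formula
  | or : Formula → Formula → Formula
  | and : Formula → Formula → Formula
deriving DecidableEq

/-- Boolean evaluation of a formula under an assignment. -/
def Formula.eval (v : ℕ → Bool) : Formula → Bool
  | .top => true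
  | .bot => false
  | .atom n => v n
  | .natom n => !(v n)
  | .or a b => a.eval v || b.eval v
  | .and a b => a.eval v && b.eval v

/-- Size of a formula: number of unit and atom occurrences. -/
def Formula.size : Formula → ℕ
  | .top => 1
  | .bot => 1
  | .atom _ => 1
  | .natom _ => 1
  | .or a b => a.size + b.size
  | .and a b => a.size + b.size

/-- De Morgan dual (negation in negation normal form). -/
def Formula.dual : Formula → Formula
  | .top => .bot
  | .bot => .top
  | .atom n => .natom n
  | .natom n => .atom n
  | .or a b => .and a.dual b.dual
  | .and a b => .or a.dual b.dual

/-- The equality relation `=` on formulae: commutativity, associativity, unit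
laws, closed under reflexivity, symmetry, transitivity and context closure. -/
inductive FEq : Formula → Formula → Prop
  | orComm (a b) : FEq (.or a b) (.or b a)
  | andComm (a b) : FEq (.and a b) (.and b a)
  | orAssoc (a b c) : FEq (.or (.or a b) c) (.or a (.or b c))
  | andAssoc (a b c) : FEq (.and (.and a b) c) (.and a (.and b c))
  | orBot (a) : FEq (.or a .bot) a
  | andTop (a) : FEq (.and a .top) a
  | topTop : FEq (.or .top .top) .top
  | botBot : FEq (.and .bot .bot) .bot
  | refl (a) : FEq a a
  | symm {a b} : FEq a b → FEq b a
  | trans {a b c} : FEq a b → FEq b c → FEq a c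
  | orCongL {a b} (c) : FEq a b → FEq (.or a c) (.or b c)
  | orCongR {a b} (c) : FEq a b → FEq (.or c a) (.or c b)
  | andCongL {a b} (c) : FEq a b → FEq (.and a c) (.and b c)
  | andCongR {a b} (c) : FEq a b → FEq (.and c a) (.and c b)

/-- Closure of a rule relation under arbitrary formula contexts. -/
inductive CtxStep (R : Formula → Formula → Prop) : Formula → Formula → Prop
  | base {a b} : R a b → CtxStep R a b
  | orL {a b} (c) : CtxStep R a b → CtxStep R (.or a c) (.or b c)
  | orR {a b} (c) : CtxStep R a b → CtxStep R (.or c a) (.or c b)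
  | andL {a b} (c) : CtxStep R a b → CtxStep R (.and a c) (.and b c)
  | andR {a b} (c) : CtxStep R a b → CtxStep R (.and c a) (.and c b)

/-- `Deriv R α β l s`: there is a derivation from premiss `α` to conclusion `β`
using rules from `R` (applied inside contexts), of length `l` and total size `s`
(the sum of the sizes of all formulae appearing in the derivation). -/
inductive Deriv (R : Formula → Formula → Prop) : Formula → Formula → ℕ → ℕ → Prop
  | refl (a) : Deriv R a a 0 a.size
  | step {a b c l s} : CtxStep R a b → Deriv R b c l s → Deriv R a c (l + 1) (s + a.size)

/-- Rules allowed in Lemma LemGInt: atomic interaction, switch and equality. -/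
inductive AiSwEq : Formula → Formula → Prop
  | ai (a : ℕ) : AiSwEq .top (.or (.atom a) (.natom a))
  | ai' (a : ℕ) : AiSwEq .top (.or (.natom a) (.atom a))
  | sw (A B C : Formula) : AiSwEq (.and A (.or B C)) (.or (.and A B) C)
  | eqv {a b : Formula} : FEq a b → AiSwEq a b

/-!
Induction on `α`. For `α = a ∨ b`, derive `a ∨ ā` from `⊤`, rewrite it to `a ∨ (ā ∧ ⊤)`,
derive `b̄ ∨ b` in place of that `⊤`, and one switch gives
`a ∨ ((ā ∧ b̄) ∨ b) = (a ∨ b) ∨ (ā ∧ b̄)`; the case `α = a ∧ b` is symmetric, starting from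
`(a ∧ ⊤) ∨ ā`. Each connective costs at most four steps, so the length is linear, and no
formula in the derivation is larger than `2|α|`, so the size is quadratic.
-/

theorem Formula.one_le_size : ∀ α : Formula, 1 ≤ α.size
  | .top | .bot | .atom _ | .natom _ => le_rfl
  | .or a _ | .and a _ => a.one_le_size.trans (Nat.le_add_right _ _)

theorem Formula.size_dual : ∀ α : Formula, α.dual.size = α.size
  | .top | .bot | .atom _ | .natom _ => rfl
  | .or a b | .and a b => by simp only [Formula.dual, Formula.size, a.size_dual, b.size_dual]

namespace Deriv

variable {R : Formula → Formula → Prop}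

theorem trans {a b c : Formula} {l₁ l₂ s₁ s₂ : ℕ} (d₁ : Deriv R a b l₁ s₁)
    (d₂ : Deriv R b c l₂ s₂) :
    ∃ s, s + b.size = s₁ + s₂ ∧ Deriv R a c (l₁ + l₂) s := by
  induction d₁ with
  | refl => exact ⟨s₂, Nat.add_comm _ _, by simpa using d₂⟩
  | @step a _ _ l s h _ ih =>
    obtain ⟨s', hs', d'⟩ := ih d₂
    exact ⟨s' + a.size, by omega, Nat.add_right_comm l 1 l₂ ▸ step h d'⟩

theorem map (f : Formula → Formula) (k : ℕ)
    (hf : ∀ {a b}, CtxStep R a b → CtxStep R (f a) (f b))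
    (hk : ∀ a, (f a).size = a.size + k) {a b : Formula} {l s : ℕ} (d : Deriv R a b l s) :
    Deriv R (f a) (f b) l (s + (l + 1) * k) := by
  induction d with
  | refl a => simpa [hk] using refl (f a)
  | @step a _ _ l s h _ ih => convert step (hf h) ih using 1; rw [hk]; ring

end Deriv

/-- Holds e.g. when every formula after the premiss `a` has size at most `w`; counting the premiss
separately makes the bound additive under composition. -/
def BoundedDeriv (R : Formula → Formula → Prop) (a b : Formula) (l w : ℕ) : Prop :=
  ∃ s, Deriv R a b l s ∧ s ≤ a.size + l * w

namespace BoundedDeriv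

variable {R : Formula → Formula → Prop} {a b c : Formula} {l l₁ l₂ w w' : ℕ}

theorem single (h : CtxStep R a b) (hb : b.size ≤ w) : BoundedDeriv R a b 1 w :=
  ⟨_, .step h (.refl b), by omega⟩

theorem trans (d₁ : BoundedDeriv R a b l₁ w) (d₂ : BoundedDeriv R b c l₂ w) :
    BoundedDeriv R a c (l₁ + l₂) w := by
  obtain ⟨s₁, d₁, hs₁⟩ := d₁
  obtain ⟨s₂, d₂, hs₂⟩ := d₂
  obtain ⟨s, hs, d⟩ := d₁.trans d₂
  exact ⟨s, d, by rw [add_mul]; omega⟩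

theorem mono (d : BoundedDeriv R a b l w) (hw : w ≤ w') : BoundedDeriv R a b l w' := by
  obtain ⟨s, d, hs⟩ := d
  exact ⟨s, d, hs.trans (by gcongr)⟩

theorem map (f : Formula → Formula) (k : ℕ)
    (hf : ∀ {a b}, CtxStep R a b → CtxStep R (f a) (f b))
    (hk : ∀ a, (f a).size = a.size + k) (d : BoundedDeriv R a b l w) :
    BoundedDeriv R (f a) (f b) l (w + k) := by
  obtain ⟨s, d, hs⟩ := d
  exact ⟨_, d.map f k hf hk, by rw [hk, mul_add, add_mul]; omega⟩

end BoundedDeriv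

namespace AiSwEq

open Formula

theorem boundedDeriv_or_dual_or {a b : Formula} {l₁ l₂ : ℕ}
    (d₁ : BoundedDeriv AiSwEq .top (a.or a.dual) l₁ (2 * a.size))
    (d₂ : BoundedDeriv AiSwEq .top (b.or b.dual) l₂ (2 * b.size)) :
    BoundedDeriv AiSwEq .top ((a.or b).or (a.or b).dual) (l₁ + l₂ + 4) (2 * (a.or b).size) := by
  have ha := a.one_le_size
  have hb := b.one_le_size
  have add_unit : BoundedDeriv AiSwEq (a.or a.dual) (a.or (a.dual.and .top)) 1
      (2 * (a.or b).size) :=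
    .single (.base (eqv (.orCongR a (.symm (.andTop _))))) (by simp only [size, size_dual]; omega)
  have comm_b : BoundedDeriv AiSwEq (b.or b.dual) (b.dual.or b) 1 (2 * b.size) :=
    .single (.base (eqv (.orComm _ _))) (by simp only [size, size_dual]; omega)
  have interact_b : BoundedDeriv AiSwEq (a.or (a.dual.and .top)) (a.or (a.dual.and (b.dual.or b)))
      (l₂ + 1) (2 * (a.or b).size) :=
    ((d₂.trans comm_b).map (fun x => a.or (a.dual.and x)) (2 * a.size)
    (fun h => .orR _ (.andR _ h)) (fun x => by simp only [size, size_dual]; ring)).mono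
      (by simp only [size]; omega)
  have switch : BoundedDeriv AiSwEq (a.or (a.dual.and (b.dual.or b)))
      (a.or ((a.dual.and b.dual).or b)) 1 (2 * (a.or b).size) :=
    .single (.orR _ (.base (sw _ _ _))) (by simp only [size, size_dual]; omega)
  have rearrange : BoundedDeriv AiSwEq (a.or ((a.dual.and b.dual).or b))
      ((a.or b).or (a.or b).dual) 1 (2 * (a.or b).size) :=
    .single (.base (eqv (.trans (.orCongR a (.orComm _ _)) (.symm (.orAssoc _ _ _)))))
      (by simp only [size, size_dual]; omega)
  convert (((d₁.mono (by simp [size])).trans add_unit).trans interact_b).trans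
    (switch.trans rearrange) using 1
  omega

theorem boundedDeriv_or_dual_and {a b : Formula} {l₁ l₂ : ℕ}
    (d₁ : BoundedDeriv AiSwEq .top (a.or a.dual) l₁ (2 * a.size))
    (d₂ : BoundedDeriv AiSwEq .top (b.or b.dual) l₂ (2 * b.size)) :
    BoundedDeriv AiSwEq .top ((a.and b).or (a.and b).dual) (l₁ + l₂ + 3)
      (2 * (a.and b).size) := by
  have ha := a.one_le_size
  have hb := b.one_le_size
  have add_unit : BoundedDeriv AiSwEq (a.or a.dual) ((a.and .top).or a.dual) 1
      (2 * (a.and b).size) :=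
    .single (.base (eqv (.orCongL _ (.symm (.andTop a))))) (by simp only [size, size_dual]; omega)
  have interact_b : BoundedDeriv AiSwEq ((a.and .top).or a.dual) ((a.and (b.or b.dual)).or a.dual)
      l₂ (2 * (a.and b).size) :=
    (d₂.map (fun x => (a.and x).or a.dual) (2 * a.size)
    (fun h => .orL _ (.andR _ h)) (fun x => by simp only [size, size_dual]; ring)).mono
      (by simp only [size]; omega)
  have switch : BoundedDeriv AiSwEq ((a.and (b.or b.dual)).or a.dual)
      (((a.and b).or b.dual).or a.dual) 1 (2 * (a.and b).size) :=
    .single (.orL _ (.base (sw _ _ _))) (by simp only [size, size_dual]; omega)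
  have rearrange : BoundedDeriv AiSwEq (((a.and b).or b.dual).or a.dual)
      ((a.and b).or (a.and b).dual) 1 (2 * (a.and b).size) :=
    .single (.base (eqv (.trans (.orAssoc _ _ _) (.orCongR _ (.orComm _ _)))))
      (by simp only [size, size_dual]; omega)
  convert (((d₁.mono (by simp [size])).trans add_unit).trans interact_b).trans
    (switch.trans rearrange) using 1
  omega

theorem exists_boundedDeriv_or_dual (α : Formula) :
    ∃ l, l + 4 ≤ 5 * α.size ∧ BoundedDeriv AiSwEq .top (α.or α.dual) l (2 * α.size) := by
  induction α with
  | top => exact ⟨1, le_rfl, .single (.base (eqv (.symm (.orBot _)))) le_rfl⟩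
  | bot =>
    exact ⟨1, le_rfl, .single (.base (eqv (.symm (.trans (.orComm _ _) (.orBot _))))) le_rfl⟩
  | atom n => exact ⟨1, le_rfl, .single (.base (ai n)) le_rfl⟩
  | natom n => exact ⟨1, le_rfl, .single (.base (ai' n)) le_rfl⟩
  | or a b iha ihb =>
    obtain ⟨l₁, hl₁, d₁⟩ := iha
    obtain ⟨l₂, hl₂, d₂⟩ := ihb
    exact ⟨_, by simp only [size]; omega, boundedDeriv_or_dual_or d₁ d₂⟩
  | and a b iha ihb =>
    obtain ⟨l₁, hl₁, d₁⟩ := iha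
    obtain ⟨l₂, hl₂, d₂⟩ := ihb
    exact ⟨_, by simp only [size]; omega, boundedDeriv_or_dual_and d₁ d₂⟩

end AiSwEq

/-- Lemma LemGInt: for every formula `α` there is a derivation from
`⊤` to `α ∨ ᾱ` using only atomic interaction, switch and equality, of length
`O(|α|)` and size `O(|α|²)`. -/
theorem atomic_interaction_derivable :
    ∃ C : ℕ, ∀ α : Formula, ∃ l s : ℕ,
      Deriv AiSwEq .top (.or α α.dual) l s ∧
      l ≤ C * α.size ∧ s ≤ C * α.size ^ 2 := by
  refine ⟨11, fun α => ?_⟩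
  obtain ⟨l, hl, s, d, hs⟩ := AiSwEq.exists_boundedDeriv_or_dual α
  have hα := α.one_le_size
  refine ⟨l, s, d, by omega, ?_⟩
  calc s ≤ 1 + l * (2 * α.size) := hs
    _ ≤ 11 * α.size ^ 2 := by nlinarith
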